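/- arXiv:1409.8235 — 5 statements merged into one kernel-verified Lean document; each statement's English description precedes it below -/
import Mathlib

section
/- Let x be a nonempty word and for each i ≥ 0 let Ztype[i] denote the Zimin type of the prefix x[1..i] (with Ztype[0] = 0). Then for every i with 1 ≤ i ≤ |x|, Ztype[i] = 1 + Ztype[j], where j = |ShortBord(x[1..i])| is the length of the longest short border of x[1..i]. -/
open List Filter

/-- The Zimin pattern `Z_k` as a word over variables `0, 1, ..., k-1`
(`Z_0` is empty, `Z_{k+1} = Z_k · x_{k+1} · Z_k`). -/
def ziminWord : ℕ → List ℕ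
  | 0 => []
  | k + 1 => ziminWord k ++ k :: ziminWord k

/-- `w` is the image of the Zimin pattern `Z_k` under a non-erasing morphism. -/
def IsZiminImage {α : Type*} (k : ℕ) (w : List α) : Prop :=
  ∃ h : ℕ → List α, (∀ i, h i ≠ []) ∧ w = (ziminWord k).flatMap h

/-- The Zimin type of `w`: the maximum `k` such that `w` is an image of `Z_k`
under a non-erasing morphism (0 for the empty word). -/
noncomputable def ziminType {α : Type*} (w : List α) : ℕ :=
  sSup {k | IsZiminImage k w}

/-- The Zimin pattern `Z_k` embeds in `w`: some factor of `w` is an image of `Z_k`. -/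
def ziminEmbeds {α : Type*} (k : ℕ) (w : List α) : Prop :=
  ∃ u : List α, u <:+: w ∧ IsZiminImage k u

/-- Length of the longest border (proper prefix that is also a proper suffix) of `w`. -/
noncomputable def bordLen {α : Type*} (w : List α) : ℕ :=
  sSup {j | w.take j <:+ w ∧ j < w.length}

/-- Length of the longest short border (border of length `< |w|/2`) of `w`. -/
noncomputable def shortBordLen {α : Type*} (w : List α) : ℕ :=
  sSup {j | w.take j <:+ w ∧ 2 * j < w.length}

/-- The longest border of `w`. -/
noncomputable def bord {α : Type*} (w : List α) : List α := w.take (bordLen w)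

/-- The longest short border of `w`. -/
noncomputable def shortBord {α : Type*} (w : List α) : List α := w.take (shortBordLen w)

/-- The Fibonacci words over `Bool` (`a = false`, `b = true`), with
`fibWord 0 = F_0 = a`, `fibWord 1 = F_1 = F_0 F_{-1} = ab`, `F_{n} = F_{n-1} F_{n-2}`. -/
def fibWord : ℕ → List Bool
  | 0 => [false]
  | 1 => [false, true]
  | n + 2 => fibWord (n + 1) ++ fibWord n

/-- The Fibonacci numbers `Φ_n = |F_n|` (`Φ_0 = 1, Φ_1 = 2, Φ_2 = 3, ...`). -/
def Phi (n : ℕ) : ℕ := (fibWord n).length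

/-- The infinite Fibonacci word `F_∞` (0-indexed letters). -/
def fibInf (i : ℕ) : Bool := (fibWord (i + 2)).getD i false

/-- The prefix `F_∞[1..n]` of the infinite Fibonacci word. -/
def fibPrefix (n : ℕ) : List Bool := (List.range n).map fibInf

/-! `w` is an image of `Z_(k+1)` exactly when `w = u m u` with `u` an image of `Z_k` and `m`
nonempty, i.e. when some short border of `w` is an image of `Z_k`. Such a short border is a
border of the longest short border `b`, and an image of `Z_(k+1)` passes from a border to the
whole word (its own outer factors become short borders of the larger word), so `b` is always an
optimal choice. -/

section

variable {α : Type*}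

lemma lt_of_mem_ziminWord {k a : ℕ} (h : a ∈ ziminWord k) : a < k := by
  induction k with
  | zero => simp [ziminWord] at h
  | succ n ih =>
    simp only [ziminWord, List.mem_append, List.mem_cons] at h
    rcases h with h | rfl | h <;> grind

lemma le_length_ziminWord (k : ℕ) : k ≤ (ziminWord k).length := by
  induction k with
  | zero => simp
  | succ n ih =>
    simp only [ziminWord, List.length_append, List.length_cons]
    omega

lemma length_le_length_flatMap {β : Type*} (l : List β) {f : β → List α}
    (hf : ∀ b, f b ≠ []) : l.length ≤ (l.flatMap f).length := by
  induction l with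
  | nil => simp
  | cons b t ih =>
    have : 0 < (f b).length := List.length_pos_iff.mpr (hf b)
    simp only [List.flatMap_cons, List.length_append, List.length_cons]
    omega

lemma IsZiminImage.le_length {k : ℕ} {w : List α} (h : IsZiminImage k w) : k ≤ w.length := by
  obtain ⟨f, hf, rfl⟩ := h
  exact (le_length_ziminWord k).trans (length_le_length_flatMap _ hf)

lemma isZiminImage_zero_iff [Nonempty α] {w : List α} : IsZiminImage 0 w ↔ w = [] :=
  ⟨fun ⟨_, _, hw⟩ => by simpa [ziminWord] using hw,
    fun hw => ⟨fun _ => [Classical.ofNonempty], by simp, by simp [hw, ziminWord]⟩⟩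

lemma isZiminImage_succ_iff {k : ℕ} {w : List α} :
    IsZiminImage (k + 1) w ↔ ∃ u m, IsZiminImage k u ∧ m ≠ [] ∧ w = u ++ m ++ u := by
  constructor
  · rintro ⟨f, hf, rfl⟩
    exact ⟨_, f k, ⟨f, hf, rfl⟩, hf k, by simp [ziminWord]⟩
  · rintro ⟨u, m, ⟨f, hf, rfl⟩, hm, rfl⟩
    refine ⟨Function.update f k m, fun i => ?_, ?_⟩
    · rcases eq_or_ne i k with rfl | hi <;> simp [*]
    -- `k` does not occur in `Z_k`, so updating the morphism at `k` leaves the image of `Z_k` alone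
    have hZ : (ziminWord k).flatMap (Function.update f k m) = (ziminWord k).flatMap f :=
      List.flatMap_congr fun a ha => Function.update_of_ne (lt_of_mem_ziminWord ha).ne _ _
    simp [ziminWord, hZ]

def IsShortBorder (u w : List α) : Prop :=
  u <+: w ∧ u <:+ w ∧ 2 * u.length < w.length

lemma isShortBorder_iff_exists_eq_append {u w : List α} :
    IsShortBorder u w ↔ ∃ m, m ≠ [] ∧ w = u ++ m ++ u := by
  constructor
  · rintro ⟨⟨t, rfl⟩, hsuf, hlen⟩
    simp only [List.length_append] at hlen
    obtain ⟨m, rfl⟩ := List.suffix_of_suffix_length_le hsuf (List.suffix_append u t) (by omega)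
    exact ⟨m, fun hm => by simp [hm] at hlen; omega, by simp⟩
  · rintro ⟨m, hm, rfl⟩
    have := List.length_pos_iff.mpr hm
    refine ⟨⟨m ++ u, by simp⟩, ⟨u ++ m, rfl⟩, ?_⟩
    simp only [List.length_append]
    omega

lemma isZiminImage_succ_iff_exists_isShortBorder {k : ℕ} {w : List α} :
    IsZiminImage (k + 1) w ↔ ∃ u, IsShortBorder u w ∧ IsZiminImage k u := by
  simp only [isZiminImage_succ_iff, isShortBorder_iff_exists_eq_append]
  grind

lemma IsShortBorder.trans_isBorder {u v w : List α} (hu : IsShortBorder u v) (hp : v <+: w)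
    (hs : v <:+ w) : IsShortBorder u w :=
  ⟨hu.1.trans hp, hu.2.1.trans hs, hu.2.2.trans_le hp.length_le⟩

lemma IsShortBorder.isPrefix_isSuffix_of_length_le {u v w : List α} (hu : IsShortBorder u w)
    (hv : IsShortBorder v w) (hlen : u.length ≤ v.length) : u <+: v ∧ u <:+ v :=
  ⟨List.prefix_of_prefix_length_le hu.1 hv.1 hlen,
    List.suffix_of_suffix_length_le hu.2.1 hv.2.1 hlen⟩

lemma IsZiminImage.of_isBorder {k : ℕ} {u w : List α} (hu : IsZiminImage (k + 1) u)
    (hp : u <+: w) (hs : u <:+ w) : IsZiminImage (k + 1) w := by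
  rw [isZiminImage_succ_iff_exists_isShortBorder] at hu ⊢
  obtain ⟨a, ha, hak⟩ := hu
  exact ⟨a, ha.trans_isBorder hp hs, hak⟩

lemma bddAbove_setOf_isZiminImage (w : List α) : BddAbove {k | IsZiminImage k w} :=
  ⟨w.length, fun _ hk => hk.le_length⟩

lemma IsZiminImage.le_ziminType {k : ℕ} {w : List α} (h : IsZiminImage k w) :
    k ≤ ziminType w :=
  le_csSup (bddAbove_setOf_isZiminImage w) h

lemma isZiminImage_ziminType [Nonempty α] (w : List α) : IsZiminImage (ziminType w) w := by
  refine Nat.sSup_mem ?_ (bddAbove_setOf_isZiminImage w)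
  rcases eq_or_ne w [] with rfl | hw
  · exact ⟨0, isZiminImage_zero_iff.mpr rfl⟩
  · exact ⟨1, fun _ => w, fun _ => hw, by simp [ziminWord]⟩

lemma ziminType_ne_zero {w : List α} (hw : w ≠ []) : ziminType w ≠ 0 := by
  have : Nonempty α := ⟨w.head hw⟩
  intro h
  exact hw (isZiminImage_zero_iff.mp (h ▸ isZiminImage_ziminType w))

lemma shortBordLen_spec {w : List α} (hw : w ≠ []) :
    IsGreatest {j | w.take j <:+ w ∧ 2 * j < w.length} (shortBordLen w) := by
  have hne : {j | w.take j <:+ w ∧ 2 * j < w.length}.Nonempty :=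
    ⟨0, by simp [List.length_pos_iff.mpr hw]⟩
  have hbdd : BddAbove {j | w.take j <:+ w ∧ 2 * j < w.length} :=
    ⟨w.length, fun _ hj => by grind⟩
  exact ⟨Nat.sSup_mem hne hbdd, fun _ hj => le_csSup hbdd hj⟩

lemma length_shortBord {w : List α} (hw : w ≠ []) : (shortBord w).length = shortBordLen w := by
  have := (shortBordLen_spec hw).1.2
  rw [shortBord, List.length_take]
  omega

lemma isShortBorder_shortBord {w : List α} (hw : w ≠ []) : IsShortBorder (shortBord w) w :=
  ⟨List.take_prefix _ w, (shortBordLen_spec hw).1.1,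
    (length_shortBord hw).symm ▸ (shortBordLen_spec hw).1.2⟩

lemma IsShortBorder.length_le_shortBordLen {u w : List α} (hu : IsShortBorder u w) :
    u.length ≤ shortBordLen w := by
  have hw : w ≠ [] := by rintro rfl; simp [IsShortBorder] at hu
  refine (shortBordLen_spec hw).2 ⟨?_, hu.2.2⟩
  rw [← List.prefix_iff_eq_take.mp hu.1]
  exact hu.2.1

theorem ziminType_eq_ziminType_shortBord_add_one {w : List α} (hw : w ≠ []) :
    ziminType w = ziminType (shortBord w) + 1 := by
  have : Nonempty α := ⟨w.head hw⟩
  have hb := isShortBorder_shortBord hw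
  apply le_antisymm
  · obtain ⟨k, hk⟩ := Nat.exists_eq_succ_of_ne_zero (ziminType_ne_zero hw)
    obtain ⟨a, ha, hak⟩ :=
      isZiminImage_succ_iff_exists_isShortBorder.mp (hk ▸ isZiminImage_ziminType w)
    obtain ⟨hp, hs⟩ := ha.isPrefix_isSuffix_of_length_le hb
      (ha.length_le_shortBordLen.trans_eq (length_shortBord hw).symm)
    rcases k with _ | k
    · omega
    · exact hk ▸ Nat.succ_le_succ ((hak.of_isBorder hp hs).le_ziminType)
  · exact (isZiminImage_succ_iff_exists_isShortBorder.mpr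
      ⟨_, hb, isZiminImage_ziminType _⟩).le_ziminType

end

theorem ziminType_prefix_recurrence_general {α : Type*} (x : List α) (hx : x ≠ [])
    (i : ℕ) (hi1 : 1 ≤ i) :
    ziminType (x.take i) = 1 + ziminType (x.take (shortBordLen (x.take i))) := by
  have hw : x.take i ≠ [] := fun h => (List.take_eq_nil_iff.mp h).elim (by omega) hx
  have hj : shortBordLen (x.take i) ≤ i :=
    (length_shortBord hw).symm.trans_le ((isShortBorder_shortBord hw).1.length_le.trans (by simp))
  have hb : x.take (shortBordLen (x.take i)) = shortBord (x.take i) := by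
    rw [shortBord, List.take_take, min_eq_left hj]
  rw [hb, ziminType_eq_ziminType_shortBord_add_one hw, add_comm]

/-- Lemma 1 (recurrence for Zimin types of prefixes): for a nonempty word `x`
and `1 ≤ i ≤ |x|`, `Ztype[i] = 1 + Ztype[j]` where `j = |ShortBord(x[1..i])|`. -/
theorem ziminType_prefix_recurrence {α : Type*} (x : List α) (hx : x ≠ [])
    (i : ℕ) (hi1 : 1 ≤ i) (hi2 : i ≤ x.length) :
    ziminType (x.take i) = 1 + ziminType (x.take (shortBordLen (x.take i))) :=
  ziminType_prefix_recurrence_general x hx i hi1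
end

section
/- Let w be a nonempty word such that ShortBord(w) = Bord(w). Then ShortBord(ww) = ShortBord(w). -/
open List Filter

/-- A border of `w w` of length `< |w|` is a suffix of the second copy of `w`, hence a border of `w`. -/
theorem shortBordLen_append_self {α : Type*} (w : List α) :
    shortBordLen (w ++ w) = bordLen w := by
  unfold shortBordLen bordLen
  congr 1
  ext j
  simp only [Set.mem_ofPred_eq, List.length_append]
  refine ⟨fun ⟨hs, hj⟩ => ?_, fun ⟨hs, hj⟩ => ?_⟩
  · rw [List.take_append_of_le_length (by omega)] at hs
    exact ⟨List.suffix_of_suffix_length_le hs (List.suffix_append w w) (by simp), by omega⟩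
  · rw [List.take_append_of_le_length hj.le]
    exact ⟨hs.trans (List.suffix_append w w), by omega⟩

theorem bordLen_le_length {α : Type*} (w : List α) : bordLen w ≤ w.length :=
  csSup_le' fun _ hj => hj.2.le

theorem shortBord_square_general {α : Type*} (w : List α)
    (h : shortBord w = bord w) :
    shortBord (w ++ w) = shortBord w := by
  rw [h, shortBord, shortBordLen_append_self, List.take_append_of_le_length (bordLen_le_length w),
    bord]

/-- Lemma 2: if `ShortBord(w) = Bord(w)` for a nonempty word `w`,
then `ShortBord(ww) = ShortBord(w)`. -/
theorem shortBord_square {α : Type*} (w : List α) (hw : w ≠ [])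
    (h : shortBord w = bord w) :
    shortBord (w ++ w) = shortBord w :=
  shortBord_square_general w h
end

section
/- For every k ≥ 1 and every n with Φ_k − 1 ≤ n ≤ Φ_{k+1} − 2, the minimal period of the prefix F_∞[1..n] of the infinite Fibonacci word equals Φ_{k-1}. Equivalently, in the sequence of minimal periods of prefixes of F_∞, each Fibonacci number Φ_k appears exactly Φ_k times, in increasing order: 1, 2, 2, 3, 3, 3, 5, 5, 5, 5, 5, 8, … . -/
open List Filter

/-- `p` is a period of the word `w`: `p ≥ 1` and `w[i] = w[i+p]` whenever both
positions are inside `w`. -/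
def IsPeriod {α : Type*} (w : List α) (p : ℕ) : Prop :=
  1 ≤ p ∧ ∀ i, i + p < w.length → w[i]? = w[i + p]?

section FibAux

lemma phi_rec (n : ℕ) : Phi (n + 2) = Phi (n + 1) + Phi n := by
  simp [Phi, fibWord]

lemma phi_zero : Phi 0 = 1 := rfl
lemma phi_one : Phi 1 = 2 := rfl

lemma phi_pos (n : ℕ) : 1 ≤ Phi n := by
  match n with
  | 0 => exact le_refl _
  | 1 => exact one_le_two
  | n + 2 => rw [phi_rec]; have := phi_pos (n+1); omega

lemma phi_le_succ (n : ℕ) : Phi n ≤ Phi (n + 1) := by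
  match n with
  | 0 => decide
  | n + 1 => rw [phi_rec]; have := phi_pos n; omega

lemma phi_mono : Monotone Phi := monotone_nat_of_le_succ phi_le_succ

lemma phi_gt (n : ℕ) : n < Phi n := by
  match n with
  | 0 => decide
  | 1 => decide
  | n + 2 =>
    have h1 := phi_gt (n + 1)
    have h2 := phi_pos n
    rw [phi_rec]; omega

lemma fibWord_prefix_succ (n : ℕ) : fibWord n <+: fibWord (n + 1) := by
  match n with
  | 0 => exact ⟨[true], rfl⟩
  | n + 1 => exact ⟨fibWord n, rfl⟩

lemma fibWord_prefix {m n : ℕ} (h : m ≤ n) : fibWord m <+: fibWord n := by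
  induction n with
  | zero => simp [Nat.le_zero.mp h]
  | succ n ih =>
    rcases Nat.lt_or_ge m (n+1) with h' | h'
    · exact (ih (by omega)).trans (fibWord_prefix_succ n)
    · have : m = n + 1 := by omega
      simp [this]

lemma getD_of_prefix {u v : List Bool} (h : u <+: v) {i : ℕ} (hi : i < u.length) :
    u.getD i false = v.getD i false := by
  obtain ⟨t, rfl⟩ := h
  rw [List.getD_append _ _ _ _ hi]

lemma fibInf_spec {i m : ℕ} (h : i < Phi m) : fibInf i = (fibWord m).getD i false := by
  have h1 : fibWord (i + 2) <+: fibWord (max (i + 2) m) := fibWord_prefix (le_max_left _ _)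
  have h2 : fibWord m <+: fibWord (max (i + 2) m) := fibWord_prefix (le_max_right _ _)
  have hi1 : i < Phi (i + 2) := lt_trans (by omega) (phi_gt (i + 2))
  rw [fibInf, getD_of_prefix h1 hi1, getD_of_prefix h2 h]

lemma nearComm (n : ℕ) : ∃ (w : List Bool) (x y : Bool), x ≠ y ∧
    fibWord (n + 1) ++ fibWord n = w ++ [x, y] ∧
    fibWord n ++ fibWord (n + 1) = w ++ [y, x] := by
  induction n with
  | zero => exact ⟨[false], true, false, by decide, rfl, rfl⟩
  | succ n ih =>
    obtain ⟨w, x, y, hxy, h1, h2⟩ := ih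
    refine ⟨fibWord (n + 1) ++ w, y, x, hxy.symm, ?_, ?_⟩
    · show (fibWord (n+1) ++ fibWord n) ++ fibWord (n+1) = _
      rw [List.append_assoc, h2, List.append_assoc]
    · show fibWord (n+1) ++ (fibWord (n+1) ++ fibWord n) = _
      rw [h1, List.append_assoc]

lemma fibInf_shift {m i : ℕ} (h : i + 3 ≤ Phi (m + 1)) :
    fibInf (i + Phi m) = fibInf i := by
  obtain ⟨w, x, y, hxy, h1, h2⟩ := nearComm m
  have hw : Phi (m + 1) + Phi m = w.length + 2 := by
    have := congrArg List.length h1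
    simpa [Phi] using this
  have hj : i + Phi m < w.length := by omega
  have hjw : (fibWord m).length ≤ i + Phi m := by
    show Phi m ≤ i + Phi m; omega
  have e1 : fibInf (i + Phi m) = (fibWord (m + 2)).getD (i + Phi m) false :=
    fibInf_spec (by rw [phi_rec]; omega)
  have hf2 : fibWord (m + 2) = w ++ [x, y] := h1
  rw [e1, hf2, List.getD_append _ _ _ _ hj, ← List.getD_append w [y,x] false _ hj, ← h2,
    List.getD_append_right _ _ _ _ hjw]
  have : i + Phi m - (fibWord m).length = i := by
    show i + Phi m - Phi m = i; omega
  rw [this]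
  exact (fibInf_spec (by omega)).symm

lemma lastTwo : ∀ n : ℕ, ∃ u : List Bool,
    fibWord (n + 1) = u ++ (if n % 2 = 0 then [false, true] else [true, false]) := by
  intro n
  induction n using Nat.strong_induction_on with
  | _ n ih =>
    match n with
    | 0 => exact ⟨[], rfl⟩
    | 1 => exact ⟨[false], rfl⟩
    | n + 2 =>
      obtain ⟨u, hu⟩ := ih n (by omega)
      refine ⟨fibWord (n + 2) ++ u, ?_⟩
      have he : (n + 2) % 2 = n % 2 := Nat.add_mod_right n 2
      rw [he]
      show fibWord (n + 2) ++ fibWord (n + 1) = _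
      rw [hu, List.append_assoc]

lemma secondLast (n : ℕ) : fibInf (Phi (n + 1) - 2) = decide (n % 2 = 1) := by
  obtain ⟨u, hu⟩ := lastTwo n
  have hlen : Phi (n + 1) = u.length + 2 := by
    rcases Nat.mod_two_eq_zero_or_one n with h | h <;> simp [Phi, hu, h]
  have hid : Phi (n + 1) - 2 = u.length := by omega
  rw [hid, fibInf_spec (m := n + 1) (by omega), hu,
    List.getD_append_right _ _ _ _ (le_refl _), Nat.sub_self]
  rcases Nat.mod_two_eq_zero_or_one n with h | h <;> simp [h]

/-- abstract period predicate on `fibInf` -/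
def PP (n p : ℕ) : Prop := ∀ i, i + p < n → fibInf i = fibInf (i + p)

lemma PP_mono {n m p : ℕ} (h : PP n p) (hm : m ≤ n) : PP m p :=
  fun i hi => h i (lt_of_lt_of_le hi hm)

lemma PP_sub {n p q : ℕ} (hp : PP n p) (hq : PP n q) (hpq : p ≤ q) :
    PP (n - p) (q - p) := by
  intro i hi
  have h1 : i + q < n := by omega
  have h2 : i + (q - p) + p = i + q := by omega
  have h3 := hp (i + (q - p)) (by omega)
  rw [h2] at h3
  rw [h3]
  exact hq i h1

lemma PP_phi (m : ℕ) : PP (Phi (m + 2) - 2) (Phi m) := by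
  intro i hi
  have hrec : Phi (m + 2) = Phi (m + 1) + Phi m := phi_rec m
  exact (fibInf_shift (m := m) (i := i) (by omega)).symm

lemma lower : ∀ k p : ℕ, 1 ≤ p → PP (Phi (k + 1) - 1) p → Phi k ≤ p := by
  intro k
  induction k using Nat.strong_induction_on with
  | _ k IH =>
    match k with
    | 0 => intro p hp _; simpa [phi_zero] using hp
    | 1 =>
      intro p hp hP
      by_contra hlt
      have hp1 : p = 1 := by simp [phi_one] at hlt; omega
      have := hP 0 (by rw [hp1]; decide)
      rw [hp1] at this
      exact absurd this (by decide)
    | m + 2 =>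
      intro p hp hP
      by_contra hlt
      push_neg at hlt
      have hrec3 : Phi (m + 3) = Phi (m + 2) + Phi (m + 1) := phi_rec (m + 1)
      have hrec2 : Phi (m + 2) = Phi (m + 1) + Phi m := phi_rec m
      have hrec4 : Phi (m + 4) = Phi (m + 3) + Phi (m + 2) := phi_rec (m + 2)
      have hpos0 := phi_pos m
      have hpos1 := phi_pos (m + 1)
      have hP' : PP (Phi (m + 3) - 1) p := hP
      -- step 1: p ≥ Phi (m+1)
      have h1 : Phi (m + 1) ≤ p := by
        refine IH (m + 1) (by omega) p hp ?_
        show PP (Phi (m + 2) - 1) p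
        exact PP_mono hP' (by omega)
      -- q := Phi (m+2) is a period of the prefix of length Phi (m+3) - 1
      have hq : PP (Phi (m + 3) - 1) (Phi (m + 2)) := by
        have h := PP_phi (m + 2)
        have h' : PP (Phi (m + 4) - 2) (Phi (m + 2)) := h
        exact PP_mono h' (by omega)
      -- reduce
      have hred : PP (Phi (m + 3) - 1 - p) (Phi (m + 2) - p) := PP_sub hP' hq (by omega)
      have h2 : Phi m ≤ Phi (m + 2) - p := by
        refine IH m (by omega) _ (by omega) ?_
        show PP (Phi (m + 1) - 1) (Phi (m + 2) - p)
        exact PP_mono hred (by omega)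
      have hpeq : p = Phi (m + 1) := by omega
      -- contradiction at position Phi(m+2) - 2
      have hi := hP' (Phi (m + 2) - 2) (by omega)
      have harg : Phi (m + 2) - 2 + p = Phi (m + 3) - 2 := by omega
      rw [harg] at hi
      have e1 : fibInf (Phi (m + 2) - 2) = decide ((m + 1) % 2 = 1) := secondLast (m + 1)
      have e2 : fibInf (Phi (m + 3) - 2) = decide ((m + 2) % 2 = 1) := secondLast (m + 2)
      rw [e1, e2] at hi
      rcases Nat.mod_two_eq_zero_or_one m with h | h <;>
        simp [Nat.add_mod, h] at hi

lemma isPeriod_iff (n p : ℕ) : IsPeriod (fibPrefix n) p ↔ 1 ≤ p ∧ PP n p := by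
  constructor
  · rintro ⟨hp, h⟩
    refine ⟨hp, fun i hi => ?_⟩
    have h' := h i (by simpa [fibPrefix] using hi)
    simp only [fibPrefix, List.getElem?_map, List.getElem?_range (show i < n by omega),
      List.getElem?_range hi, Option.map_some] at h'
    exact Option.some.inj h'
  · rintro ⟨hp, h⟩
    refine ⟨hp, fun i hi => ?_⟩
    simp only [fibPrefix, List.length_map, List.length_range] at hi
    simp only [fibPrefix, List.getElem?_map, List.getElem?_range (show i < n by omega),
      List.getElem?_range hi, Option.map_some]
    exact congrArg some (h i hi)

end FibAux

/-- For every `k ≥ 1` and every `n` with `Φ_k − 1 ≤ n ≤ Φ_{k+1} − 2`, the minimal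
period of the prefix `F_∞[1..n]` equals `Φ_{k-1}`. -/
theorem minPeriod_fibPrefix (k : ℕ) (hk : 1 ≤ k) (n : ℕ)
    (h1 : Phi k - 1 ≤ n) (h2 : n ≤ Phi (k + 1) - 2) :
    IsPeriod (fibPrefix n) (Phi (k - 1)) ∧
      ∀ p, IsPeriod (fibPrefix n) p → Phi (k - 1) ≤ p := by
  obtain ⟨m, rfl⟩ : ∃ m, k = m + 1 := ⟨k - 1, by omega⟩
  simp only [Nat.add_sub_cancel]
  have h2' : n ≤ Phi (m + 2) - 2 := h2
  have h1' : Phi (m + 1) - 1 ≤ n := h1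
  have hub : PP n (Phi m) := PP_mono (PP_phi m) h2'
  constructor
  · rw [isPeriod_iff]
    exact ⟨phi_pos m, hub⟩
  · intro p hp
    rw [isPeriod_iff] at hp
    exact lower m p hp.1 (PP_mono hp.2 h1')
end

section
/- Let n ≥ 1 and let k ≥ 1 be such that Φ_{2(k-1)} ≤ n < Φ_{2k}. Then the maximum rank of a Zimin pattern that embeds in the prefix F_∞[1..n] of the infinite Fibonacci word equals k; moreover this maximum is attained on the prefix F_{2(k-1)}, whose Zimin type is k. -/
open List Filter

/-!
`F_∞` is the mechanical word of slope `θ = ψ² = 2 - φ`: its letter `i` is `b` exactly when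
`⌊(i + 2)θ⌋ - ⌊(i + 1)θ⌋ = 1`. Since `fib n * θ ≡ ψ ^ n (mod 1)`, the Fibonacci numbers are the best
approximations of `θ`: with `σ = |ψ|`, every `0 < e < fib (m + 1)` has `eθ` at distance `≥ σ ^ m`
from `ℤ`, every `fib (j + 2) < d < fib (j + 3)` has `dθ` at distance `> σ ^ j`, and any
`fib (j + 2) + 1` consecutive points of the orbit `iθ mod 1` come within `σ ^ j` of `0`.

If a factor of length `L ≥ fib (j + 2)` recurs at distance `d > L`, the drift
`(i + d)θ - iθ mod 1` stays constant along the occurrence; the orbit comes near `0` both at `i`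
and at `i + d`, so `dθ` is within `σ ^ j` of `ℤ`, forcing `d ≥ fib (j + 3)`. An image of
`Z_{m+2}` is `v x v` with `v` an image of `Z_{m+1}`, so images of `Z_{m+1}` in `F_∞` have
length `≥ fib (2m + 2) = Φ_{2m}`. Conversely `F_{2k+2} = F_{2k} F_{2k-1} F_{2k}` exhibits `F_{2k}`
as an image of `Z_{k+1}`.
-/

theorem IsZiminImage.exists_eq_append {β : Type*} {k : ℕ} {w : List β}
    (h : IsZiminImage (k + 1) w) : ∃ v x, IsZiminImage k v ∧ x ≠ [] ∧ w = v ++ x ++ v := by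
  obtain ⟨f, hf, rfl⟩ := h
  exact ⟨_, f k, ⟨f, hf, rfl⟩, hf k, by simp [ziminWord]⟩

section Window

variable {β : Type*} (x : ℕ → β)

def window (p L : ℕ) : List β := (List.range L).map fun t => x (p + t)

@[simp] lemma length_window (p L : ℕ) : (window x p L).length = L := by simp [window]

lemma window_add (p a b : ℕ) : window x p (a + b) = window x p a ++ window x (p + a) b := by
  simp [window, List.range_add, Nat.add_assoc]

variable {x}

lemma eq_window_of_window_eq_append {p L : ℕ} {u v : List β} (h : window x p L = u ++ v) :
    u = window x p u.length ∧ v = window x (p + u.length) v.length := by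
  have hL : L = u.length + v.length := by simpa using congrArg List.length h
  rw [hL, window_add] at h
  exact List.append_inj h.symm (by simp)

lemma exists_eq_window_of_isInfix {p L : ℕ} {u : List β} (h : u <:+: window x p L) :
    ∃ q, u = window x q u.length := by
  obtain ⟨s, t, hst⟩ := h
  obtain ⟨hsu, -⟩ := eq_window_of_window_eq_append hst.symm
  exact ⟨_, (eq_window_of_window_eq_append hsu.symm).2⟩

lemma apply_eq_of_window_eq {p q L t : ℕ} (h : window x p L = window x q L) (ht : t < L) :
    x (p + t) = x (q + t) := by
  simpa [window, ht] using congrArg (·[t]?) h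

end Window

section FloorRing

variable {R : Type*} [CommRing R] [LinearOrder R] [IsStrictOrderedRing R]

lemma min_le_abs_intCast_add (n : ℤ) (r : R) : min |r| (1 - |r|) ≤ |n + r| := by
  rcases eq_or_ne n 0 with rfl | hn
  · simp
  · have h1 : (1 : R) ≤ |(n : R)| := by exact_mod_cast Int.one_le_abs hn
    have h2 := abs_add' (n : R) r
    rw [add_comm r] at h2
    exact min_le_of_right_le (by linarith)

lemma Int.floor_add_eq_of_abs_lt [FloorRing R] {x r : R} (h : ∀ P : ℤ, |r| < |x - P|) :
    ⌊x + r⌋ = ⌊x⌋ := by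
  have h0 := h ⌊x⌋
  have h1 := h (⌊x⌋ + 1)
  have hx0 := Int.floor_le x
  have hx1 := Int.lt_floor_add_one x
  push_cast at h1
  rw [abs_of_nonneg (a := x - ⌊x⌋) (by linarith)] at h0
  rw [abs_of_neg (a := x - (⌊x⌋ + 1)) (by linarith)] at h1
  rw [Int.floor_eq_iff]
  constructor <;> linarith [neg_abs_le r, le_abs_self r]

end FloorRing

open Real
open Nat (fib)
open scoped goldenRatio

namespace FibonacciZimin

local notation "σ" => |ψ|
local notation "θ" => ψ ^ 2

lemma abs_goldenConj : σ = -ψ := abs_of_neg goldenConj_neg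

lemma abs_goldenConj_sq : σ ^ 2 = 1 - σ := by
  rw [sq_abs, goldenConj_sq, abs_goldenConj]; ring

lemma abs_goldenConj_bounds : 0.61 < σ ∧ σ < 0.62 := by
  have h5 : √5 ^ 2 = 5 := Real.sq_sqrt (by norm_num)
  have h0 := Real.sqrt_nonneg 5
  rw [abs_goldenConj, goldenConj]
  constructor <;> nlinarith

lemma abs_goldenConj_pos : 0 < σ := abs_pos.mpr goldenConj_ne_zero

lemma abs_goldenConj_lt_one : σ < 1 := by linarith [abs_goldenConj_bounds.2]

lemma abs_goldenConj_pow_eq_add (k : ℕ) : σ ^ k = σ ^ (k + 1) + σ ^ (k + 2) := by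
  linear_combination (-(σ ^ k)) * abs_goldenConj_sq

lemma abs_goldenConj_pow_le {m n : ℕ} (h : m ≤ n) : σ ^ n ≤ σ ^ m :=
  pow_le_pow_of_le_one abs_goldenConj_pos.le abs_goldenConj_lt_one.le h

lemma goldenConj_sq_eq : θ = σ ^ 2 := (sq_abs ψ).symm

lemma exists_fib_mul_eq (n : ℕ) : ∃ z : ℤ, (fib n : ℝ) * θ = z + ψ ^ n := by
  cases n with
  | zero => exact ⟨-1, by simp⟩
  | succ n =>
    refine ⟨fib (n + 1) - fib n, ?_⟩
    rw [goldenConj_sq, ← goldenConj_mul_fib_succ_add_fib]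
    push_cast
    ring

lemma sub_le_abs_fib_add_mul_sub {c : ℝ} {e : ℕ} (m : ℕ) (h : ∀ P : ℤ, c ≤ |(e : ℝ) * θ - P|)
    (P : ℤ) : c - σ ^ m ≤ |((fib m + e : ℕ) : ℝ) * θ - P| := by
  obtain ⟨z, hz⟩ := exists_fib_mul_eq m
  have hsplit : ((fib m + e : ℕ) : ℝ) * θ - P = ((e : ℝ) * θ - ((P - z : ℤ) : ℝ)) + ψ ^ m := by
    push_cast
    linear_combination hz
  rw [hsplit]
  have := abs_add' ((e : ℝ) * θ - ((P - z : ℤ) : ℝ)) (ψ ^ m)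
  rw [abs_pow, add_comm (ψ ^ m)] at this
  linarith [h (P - z)]

theorem abs_goldenConj_pow_le_abs_mul_sub {m e : ℕ} (he : 0 < e) (hem : e < fib (m + 1))
    (P : ℤ) : σ ^ m ≤ |(e : ℝ) * θ - P| := by
  induction m using Nat.strong_induction_on generalizing e P with
  | _ m ih =>
  obtain ⟨k, rfl⟩ : ∃ k, m = k + 2 := ⟨m - 2, by rcases m with _ | _ | m <;> simp_all⟩
  have hfib : fib (k + 2 + 1) = fib (k + 1) + fib (k + 2) := Nat.fib_add_two
  rcases lt_trichotomy e (fib (k + 2)) with h | rfl | h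
  · exact (abs_goldenConj_pow_le (by omega)).trans (ih (k + 1) (by omega) he h P)
  · obtain ⟨z, hz⟩ := exists_fib_mul_eq (k + 2)
    have hsmall : σ ^ (k + 2) < 1 / 2 := by
      nlinarith [abs_goldenConj_pow_le (show 2 ≤ k + 2 by omega), abs_goldenConj_bounds]
    have := min_le_abs_intCast_add (z - P) (ψ ^ (k + 2))
    rw [abs_pow, min_eq_left (by linarith)] at this
    refine this.trans_eq (congrArg _ ?_)
    rw [hz]
    push_cast
    ring
  · obtain ⟨e', rfl⟩ : ∃ e', e = fib (k + 2) + e' := ⟨e - fib (k + 2), by omega⟩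
    have := sub_le_abs_fib_add_mul_sub (k + 2) (ih k (by omega) (e := e') (by omega) (by omega)) P
    linarith [abs_goldenConj_pow_eq_add k, abs_goldenConj_pow_le (show k + 1 ≤ k + 2 by omega)]

theorem abs_goldenConj_pow_lt_abs_mul_sub {j d : ℕ} (hd : fib (j + 2) < d) (hd' : d < fib (j + 3))
    (P : ℤ) : σ ^ j < |(d : ℝ) * θ - P| := by
  have hσ := abs_goldenConj_bounds
  have hσ3 : σ ^ 3 = 2 * σ - 1 := by linear_combination (σ - 1) * abs_goldenConj_sq
  have hσ4 : σ ^ 4 = 2 - 3 * σ := by linear_combination (σ ^ 2 - σ + 2) * abs_goldenConj_sq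
  obtain ⟨e, rfl⟩ : ∃ e, d = fib (j + 2) + e := ⟨d - fib (j + 2), by omega⟩
  have hfib : fib (j + 3) = fib (j + 1) + fib (j + 2) := Nat.fib_add_two
  rcases lt_trichotomy e (fib j) with h | rfl | h
  · obtain ⟨k, rfl⟩ : ∃ k, j = k + 1 := ⟨j - 1, by rcases j with _ | j <;> simp_all⟩
    have := sub_le_abs_fib_add_mul_sub (k + 1 + 2)
      (abs_goldenConj_pow_le_abs_mul_sub (m := k) (by omega) h) P
    have hk := pow_pos abs_goldenConj_pos k
    have : σ ^ (k + 1) + σ ^ (k + 1 + 2) < σ ^ k := by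
      rw [show k + 1 + 2 = k + 3 by ring, pow_succ, pow_add, hσ3]
      nlinarith
    linarith
  · obtain ⟨k, rfl⟩ : ∃ k, j = k + 2 := ⟨j - 2, by
      rcases j with _ | _ | j
      · simp at hd
      · simp [Nat.fib_add_two] at hd'
      · omega⟩
    obtain ⟨z, hz⟩ := exists_fib_mul_eq (k + 2 + 2)
    obtain ⟨z', hz'⟩ := exists_fib_mul_eq (k + 2)
    have hmin := min_le_abs_intCast_add (z + z' - P) (ψ ^ (k + 2) * (1 + θ))
    have habs : |ψ ^ (k + 2) * (1 + θ)| = σ ^ (k + 2) * (1 + σ ^ 2) := by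
      rw [abs_mul, abs_pow, abs_of_pos (show (0 : ℝ) < 1 + θ by positivity), goldenConj_sq_eq]
    rw [habs] at hmin
    have hk := pow_pos abs_goldenConj_pos k
    have : σ ^ (k + 2) < min (σ ^ (k + 2) * (1 + σ ^ 2)) (1 - σ ^ (k + 2) * (1 + σ ^ 2)) := by
      rw [pow_add]
      refine lt_min (by nlinarith) ?_
      have hk1 : σ ^ k ≤ 1 := pow_le_one₀ abs_goldenConj_pos.le abs_goldenConj_lt_one.le
      nlinarith [abs_goldenConj_sq]
    refine this.trans_le (hmin.trans_eq (congrArg _ ?_))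
    push_cast
    linear_combination -hz - hz'
  · obtain ⟨k, rfl⟩ : ∃ k, j = k + 2 := ⟨j - 2, by
      rcases j with _ | _ | j
      · simp [Nat.fib_add_two] at hd'
        omega
      · simp [Nat.fib_add_two] at h hd'
        omega
      · omega⟩
    obtain ⟨e', rfl⟩ : ∃ e', e = fib (k + 2) + e' := ⟨e - fib (k + 2), by omega⟩
    have hfib' : fib (k + 2 + 1) = fib (k + 1) + fib (k + 2) := Nat.fib_add_two
    have := sub_le_abs_fib_add_mul_sub (k + 2 + 2) (sub_le_abs_fib_add_mul_sub (k + 2)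
      (abs_goldenConj_pow_le_abs_mul_sub (m := k) (e := e') (by omega) (by omega))) P
    have hk := pow_pos abs_goldenConj_pos k
    have : σ ^ (k + 2) + σ ^ (k + 2) + σ ^ (k + 2 + 2) < σ ^ k := by
      rw [show k + 2 + 2 = k + 4 by ring, pow_add, pow_add, hσ4, abs_goldenConj_sq]
      nlinarith
    linarith

noncomputable def beatty (i : ℕ) : ℤ := ⌊(i : ℝ) * θ⌋

noncomputable def orbit (i : ℕ) : ℝ := Int.fract ((i : ℝ) * θ)

noncomputable def fibLetter (i : ℕ) : Bool := decide (beatty (i + 2) - beatty (i + 1) = 1)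

lemma orbit_eq (i : ℕ) : orbit i = i * θ - beatty i := rfl

lemma exists_beatty_fib_add (m : ℕ) :
    ∃ z : ℤ, ∀ t, 0 < t → t < fib m → beatty (fib m + t) = z + beatty t := by
  obtain ⟨z, hz⟩ := exists_fib_mul_eq m
  refine ⟨z, fun t ht htm => ?_⟩
  obtain ⟨k, rfl⟩ : ∃ k, m = k + 1 := ⟨m - 1, by rcases m with _ | m <;> simp_all⟩
  have hfloor : ⌊(t : ℝ) * θ + ψ ^ (k + 1)⌋ = ⌊(t : ℝ) * θ⌋ :=
    Int.floor_add_eq_of_abs_lt fun P => by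
      rw [abs_pow]
      exact (pow_lt_pow_right_of_lt_one₀ abs_goldenConj_pos abs_goldenConj_lt_one
        (lt_add_one k)).trans_le (abs_goldenConj_pow_le_abs_mul_sub ht htm P)
  rw [beatty, beatty, ← hfloor, ← Int.floor_intCast_add]
  push_cast
  rw [add_mul, hz]
  ring_nf

lemma fibLetter_fib_add {m i : ℕ} (h : i + 2 < fib m) : fibLetter (fib m + i) = fibLetter i := by
  obtain ⟨z, hz⟩ := exists_beatty_fib_add m
  simp only [fibLetter, add_assoc, hz (i + 2) (by omega) h, hz (i + 1) (by omega) (by omega),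
    add_sub_add_left_eq_sub]

lemma beatty_small_values :
    beatty 1 = 0 ∧ beatty 2 = 0 ∧ beatty 3 = 1 ∧ beatty 4 = 1 ∧ beatty 5 = 1 ∧ beatty 6 = 2 := by
  have hθ : θ = 1 - σ := by rw [goldenConj_sq_eq, abs_goldenConj_sq]
  have hσ := abs_goldenConj_bounds
  refine ⟨?_, ?_, ?_, ?_, ?_, ?_⟩ <;> rw [beatty, Int.floor_eq_iff, hθ] <;> push_cast <;>
    constructor <;> linarith

lemma fibWord_eq_map (n : ℕ) : fibWord n = (List.range (fib (n + 2))).map fibLetter := by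
  induction n using Nat.strong_induction_on with
  | _ n ih =>
  obtain ⟨h1, h2, h3, h4, h5, h6⟩ := beatty_small_values
  match n with
  | 0 =>
    show fibWord 0 = (List.range 1).map fibLetter
    simp [fibWord, fibLetter, h1, h2]
  | 1 =>
    show fibWord 1 = (List.range 2).map fibLetter
    simp [fibWord, List.range_succ, fibLetter, h1, h2, h3]
  | 2 =>
    show fibWord 2 = (List.range 3).map fibLetter
    simp [fibWord, List.range_succ, fibLetter, h1, h2, h3, h4]
  | 3 =>
    show fibWord 3 = (List.range 5).map fibLetter
    simp [fibWord, List.range_succ, fibLetter, h1, h2, h3, h4, h5, h6]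
  | n + 4 =>
    have hf : fib (n + 4 + 2) = fib (n + 5) + fib (n + 4) := by
      rw [Nat.fib_add_two, add_comm]
    have hf' : fib (n + 5) = fib (n + 3) + fib (n + 4) := Nat.fib_add_two
    have h2 : 2 ≤ fib (n + 3) := (by decide : 2 ≤ fib 3).trans (Nat.fib_mono (by omega))
    rw [show fibWord (n + 4) = fibWord (n + 3) ++ fibWord (n + 2) from rfl, ih (n + 3) (by omega),
      ih (n + 2) (by omega), hf, List.range_add, List.map_append, List.map_map]
    congr 1
    refine List.map_congr_left fun i hi => (fibLetter_fib_add ?_).symm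
    have : i < fib (n + 4) := List.mem_range.mp hi
    omega

lemma Phi_eq_fib (n : ℕ) : Phi n = fib (n + 2) := by
  rw [Phi, fibWord_eq_map, List.length_map, List.length_range]

lemma fibInf_eq_fibLetter : fibInf = fibLetter := by
  funext i
  have hi : i < fib (i + 2 + 2) := by have := Nat.le_fib_add_one (i + 2 + 2); omega
  simp [fibInf, fibWord_eq_map, List.getD_eq_getElem?_getD, hi]

lemma beatty_succ_sub (i : ℕ) : beatty (i + 1) - beatty i = 0 ∨ beatty (i + 1) - beatty i = 1 := by
  have hθ : 0 < θ ∧ θ < 1 := by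
    rw [goldenConj_sq_eq]
    constructor <;> nlinarith [abs_goldenConj_bounds]
  have hlo : beatty i ≤ beatty (i + 1) := Int.floor_mono (by push_cast; nlinarith)
  have hhi : beatty (i + 1) ≤ beatty i + 1 := by
    rw [beatty, beatty, ← Int.floor_add_one]
    exact Int.floor_mono (by push_cast; nlinarith)
  omega

lemma orbit_gap_eq_of_fibInf_eq {a b : ℕ} (h : fibInf a = fibInf b) :
    orbit (a + 2) - orbit (a + 1) = orbit (b + 2) - orbit (b + 1) := by
  have hgap : beatty (a + 2) - beatty (a + 1) = beatty (b + 2) - beatty (b + 1) := by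
    rw [fibInf_eq_fibLetter, fibLetter, fibLetter, decide_eq_decide] at h
    rcases beatty_succ_sub (a + 1) with ha | ha <;> rcases beatty_succ_sub (b + 1) with hb | hb <;>
      simp_all
  have := congrArg (Int.cast : ℤ → ℝ) hgap
  simp only [orbit_eq]
  push_cast at this ⊢
  linarith

lemma orbit_add_fib_of_odd {i n : ℕ} (hn : Odd n) (h : σ ^ n ≤ orbit i) :
    orbit (i + fib n) = orbit i - σ ^ n := by
  obtain ⟨z, hz⟩ := exists_fib_mul_eq n
  have hpow : σ ^ n = -ψ ^ n := by rw [abs_goldenConj, hn.neg_pow]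
  have hlt : orbit i < 1 := Int.fract_lt_one _
  rw [orbit, Int.fract_eq_iff]
  refine ⟨by linarith, by linarith [pow_pos abs_goldenConj_pos n], beatty i + z, ?_⟩
  rw [orbit_eq, hpow]
  push_cast
  linear_combination hz

lemma exists_orbit_add_le_two_mul (s i : ℕ) :
    ∃ t ≤ fib (2 * i + 2), orbit (s + t) ≤ σ ^ (2 * i) := by
  induction i with
  | zero => exact ⟨0, by simp, by simpa [orbit] using (Int.fract_lt_one _).le⟩
  | succ i ih =>
    obtain ⟨t, ht, hz⟩ := ih
    rw [show 2 * (i + 1) = 2 * i + 2 by ring]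
    have h0 := abs_goldenConj_pow_eq_add (2 * i)
    have h1 := abs_goldenConj_pow_eq_add (2 * i + 1)
    have h12 := abs_goldenConj_pow_le (show 2 * i + 2 ≤ 2 * i + 3 by omega)
    have hf3 : fib (2 * i + 3) = fib (2 * i + 1) + fib (2 * i + 2) := Nat.fib_add_two
    have hf4 : fib (2 * i + 2 + 2) = fib (2 * i + 2) + fib (2 * i + 3) := Nat.fib_add_two
    by_cases hA : orbit (s + t) ≤ σ ^ (2 * i + 2)
    · exact ⟨t, by omega, hA⟩
    by_cases hB : orbit (s + t) ≤ σ ^ (2 * i + 1)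
    · refine ⟨t + fib (2 * i + 3), by omega, ?_⟩
      rw [← add_assoc, orbit_add_fib_of_odd ⟨i + 1, by ring⟩ (by linarith)]
      linarith
    · refine ⟨t + fib (2 * i + 1), by omega, ?_⟩
      rw [← add_assoc, orbit_add_fib_of_odd (odd_two_mul_add_one i) (by linarith)]
      linarith

theorem exists_orbit_add_le (j s : ℕ) : ∃ t ≤ fib (j + 2), orbit (s + t) ≤ σ ^ j := by
  obtain ⟨i, rfl | rfl⟩ := Nat.even_or_odd' j
  · exact exists_orbit_add_le_two_mul s i
  · obtain ⟨t, ht, hz⟩ := exists_orbit_add_le_two_mul s i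
    have h0 := abs_goldenConj_pow_eq_add (2 * i)
    have h12 := abs_goldenConj_pow_le (show 2 * i + 1 ≤ 2 * i + 2 by omega)
    have hf3 : fib (2 * i + 1 + 2) = fib (2 * i + 1) + fib (2 * i + 2) := Nat.fib_add_two
    by_cases hA : orbit (s + t) ≤ σ ^ (2 * i + 1)
    · exact ⟨t, by omega, hA⟩
    · refine ⟨t + fib (2 * i + 1), by omega, ?_⟩
      rw [← add_assoc, orbit_add_fib_of_odd (odd_two_mul_add_one i) (by linarith)]
      linarith

theorem fib_add_three_le_of_window_eq {j p d L : ℕ} (hL : fib (j + 2) ≤ L) (hLd : L < d)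
    (h : window fibInf p L = window fibInf (p + d) L) : fib (j + 3) ≤ d := by
  by_contra! hd
  have hdrift : ∀ t ≤ L,
      orbit (p + d + t + 1) - orbit (p + t + 1) = orbit (p + d + 1) - orbit (p + 1) := by
    intro t ht
    induction t with
    | zero => rfl
    | succ t ih =>
      have hgap := orbit_gap_eq_of_fibInf_eq (apply_eq_of_window_eq h (t := t) (by omega))
      have := ih (by omega)
      show orbit (p + d + t + 2) - orbit (p + t + 2) = _
      linarith
  obtain ⟨P, hP⟩ : ∃ P : ℤ, orbit (p + d + 1) - orbit (p + 1) = d * θ - P :=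
    ⟨beatty (p + d + 1) - beatty (p + 1), by simp only [orbit_eq]; push_cast; ring⟩
  obtain ⟨t, ht, hlow⟩ := exists_orbit_add_le j (p + 1)
  obtain ⟨t', ht', hhigh⟩ := exists_orbit_add_le j (p + d + 1)
  rw [add_right_comm] at hlow hhigh
  have h1 := hdrift t (ht.trans hL)
  have h2 := hdrift t' (ht'.trans hL)
  have h1' : 0 ≤ orbit (p + d + t + 1) := Int.fract_nonneg _
  have h2' : 0 ≤ orbit (p + t' + 1) := Int.fract_nonneg _
  have := abs_goldenConj_pow_lt_abs_mul_sub (by omega : fib (j + 2) < d) hd P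
  rw [← hP] at this
  exact this.not_ge (abs_le.mpr ⟨by linarith, by linarith⟩)

theorem fib_le_length_of_isZiminImage_window {m p L : ℕ}
    (h : IsZiminImage (m + 1) (window fibInf p L)) : fib (2 * m + 2) ≤ L := by
  induction m generalizing p L with
  | zero =>
    obtain ⟨v, x, -, hx, hw⟩ := h.exists_eq_append
    have hlen : L = v.length + x.length + v.length := by
      simpa [add_assoc] using congrArg List.length hw
    have := List.length_pos_iff.mpr hx
    show 1 ≤ L
    omega
  | succ m ih =>
    obtain ⟨v, x, hv, hx, hw⟩ := h.exists_eq_append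
    obtain ⟨hvx, hv₂⟩ := eq_window_of_window_eq_append hw
    obtain ⟨hv₁, -⟩ := eq_window_of_window_eq_append hvx.symm
    have hlen : L = v.length + x.length + v.length := by
      simpa [add_assoc] using congrArg List.length hw
    have hv_len : fib (2 * m + 2) ≤ v.length := ih (p := p) (by rwa [← hv₁])
    have hx_len := List.length_pos_iff.mpr hx
    have hgap : fib (2 * m + 3) ≤ v.length + x.length :=
      fib_add_three_le_of_window_eq hv_len (by omega) (by simpa using hv₁.symm.trans hv₂)
    have hf : fib (2 * (m + 1) + 2) = fib (2 * m + 2) + fib (2 * m + 3) := Nat.fib_add_two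
    omega

lemma fibWord_eq_window (n : ℕ) : fibWord n = window fibInf 0 (Phi n) := by
  simp [fibWord_eq_map, window, fibInf_eq_fibLetter, Phi_eq_fib]

lemma fibPrefix_eq_window (n : ℕ) : fibPrefix n = window fibInf 0 n := by
  simp [fibPrefix, window]

lemma fibWord_prefix_fibPrefix {n k : ℕ} (h : Phi k ≤ n) : fibWord k <+: fibPrefix n := by
  rw [fibPrefix_eq_window, ← Nat.add_sub_cancel' h, window_add, fibWord_eq_window]
  exact List.prefix_append _ _

lemma le_of_isZiminImage_of_isInfix {n k m : ℕ} {u : List Bool} (hn : n < Phi (2 * k))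
    (hu : u <:+: fibPrefix n) (hm : IsZiminImage m u) : m ≤ k := by
  rcases m with _ | m
  · exact Nat.zero_le k
  rw [fibPrefix_eq_window] at hu
  obtain ⟨q, hq⟩ := exists_eq_window_of_isInfix hu
  have hmu := fib_le_length_of_isZiminImage_window (hq ▸ hm)
  have hun : u.length ≤ n := by simpa using hu.length_le
  rw [Phi_eq_fib] at hn
  have := Nat.fib_add_two_strictMono.lt_iff_lt.mp (show fib (2 * m + 2) < fib (2 * k + 2) by omega)
  omega

-- The variable `i ≥ 1` goes to `F_{2i-3}`, reading `F_{-1} = b`.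
def fibMorphism : ℕ → List Bool
  | 0 => [false]
  | 1 => [true]
  | i + 2 => fibWord (2 * i + 1)

lemma fibMorphism_ne_nil (i : ℕ) : fibMorphism i ≠ [] := by
  rcases i with _ | _ | i
  · simp [fibMorphism]
  · simp [fibMorphism]
  · rw [fibMorphism, ← List.length_pos_iff, ← Phi, Phi_eq_fib]
    exact Nat.fib_pos.mpr (by omega)

lemma fibWord_two_mul_add_two (k : ℕ) :
    fibWord (2 * k + 2) = fibWord (2 * k) ++ fibMorphism (k + 1) ++ fibWord (2 * k) := by
  rcases k with _ | k
  · rfl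
  · show fibWord (2 * k + 2 + 1) ++ fibWord (2 * k + 2) = _
    simp [fibWord, fibMorphism, Nat.mul_succ]

theorem isZiminImage_fibWord (k : ℕ) : IsZiminImage (k + 1) (fibWord (2 * k)) := by
  refine ⟨fibMorphism, fibMorphism_ne_nil, ?_⟩
  induction k with
  | zero => rfl
  | succ k ih =>
    rw [show ziminWord (k + 1 + 1) = ziminWord (k + 1) ++ (k + 1) :: ziminWord (k + 1) from rfl,
      List.flatMap_append, List.flatMap_cons, ← ih, Nat.mul_succ, fibWord_two_mul_add_two]
    simp

end FibonacciZimin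

theorem maxRank_zimin_fibPrefix_general (n k : ℕ) (hk : 1 ≤ k)
    (h1 : Phi (2 * (k - 1)) ≤ n) (h2 : n < Phi (2 * k)) :
    ziminEmbeds k (fibPrefix n) ∧
    (∀ m, ziminEmbeds m (fibPrefix n) → m ≤ k) ∧
    fibWord (2 * (k - 1)) <+: fibPrefix n ∧
    ziminType (fibWord (2 * (k - 1))) = k := by
  have hpre := FibonacciZimin.fibWord_prefix_fibPrefix h1
  have himage : IsZiminImage k (fibWord (2 * (k - 1))) := by
    simpa [Nat.sub_add_cancel hk] using FibonacciZimin.isZiminImage_fibWord (k - 1)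
  have hmax : ∀ m u, u <:+: fibPrefix n → IsZiminImage m u → m ≤ k :=
    fun m u hu hm => FibonacciZimin.le_of_isZiminImage_of_isInfix h2 hu hm
  exact ⟨⟨_, hpre.isInfix, himage⟩, fun m ⟨u, hu, hm⟩ => hmax m u hu hm, hpre,
    IsGreatest.csSup_eq ⟨himage, fun m hm => hmax m _ hpre.isInfix hm⟩⟩

/-- Theorem 5 (combinatorial content): for `Φ_{2(k-1)} ≤ n < Φ_{2k}`, the maximal
rank of a Zimin pattern embeddable in `F_∞[1..n]` equals `k`, and it is attained
on the prefix `F_{2(k-1)}`, whose Zimin type is `k`. -/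
theorem maxRank_zimin_fibPrefix (n k : ℕ) (hn : 1 ≤ n) (hk : 1 ≤ k)
    (h1 : Phi (2 * (k - 1)) ≤ n) (h2 : n < Phi (2 * k)) :
    ziminEmbeds k (fibPrefix n) ∧
    (∀ m, ziminEmbeds m (fibPrefix n) → m ≤ k) ∧
    fibWord (2 * (k - 1)) <+: fibPrefix n ∧
    ziminType (fibWord (2 * (k - 1))) = k :=
  maxRank_zimin_fibPrefix_general n k hk h1 h2
end

section
/- Let w be the infinite fixed point beginning with a of the binary morphism a → abaa, b → abab. Then w is a Zimin encoding: for every n ≥ 1, the prefix of w of length 2^n − 1 is the image of the Zimin pattern Z_n under some non-erasing morphism (in fact, under a letter-to-letter morphism applied to Z_n's letters as they appear in the infinite Zimin word). -/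
open List Filter

/-- The morphism `a → abaa`, `b → abab` (with `a = false`, `b = true`). -/
def mu : Bool → List Bool
  | false => [false, true, false, false]
  | true => [false, true, false, true]

/-- 2-adic valuation of `j+1` (ruler sequence). -/
def val2 (j : ℕ) : ℕ :=
  if j % 2 = 0 then 0 else val2 (j / 2) + 1
decreasing_by exact Nat.div_lt_self (by omega) (by omega)

lemma val2_even {j : ℕ} (h : j % 2 = 0) : val2 j = 0 := by
  rw [val2]; simp [h]

lemma val2_odd {j : ℕ} (h : j % 2 = 1) : val2 j = val2 (j / 2) + 1 := by
  rw [val2]; simp [h]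

lemma val2_pow_sub_one : ∀ k, val2 (2 ^ k - 1) = k := by
  intro k
  induction k with
  | zero => simp [val2_even]
  | succ k ih =>
    have h2 : 2 ^ (k + 1) = 2 * 2 ^ k := by ring
    have h1 : 1 ≤ 2 ^ k := Nat.one_le_two_pow
    have hodd : (2 ^ (k + 1) - 1) % 2 = 1 := by omega
    rw [val2_odd hodd]
    have : (2 ^ (k + 1) - 1) / 2 = 2 ^ k - 1 := by omega
    rw [this, ih]

lemma val2_shift : ∀ k j, j < 2 ^ k - 1 → val2 (2 ^ k + j) = val2 j := by
  intro k
  induction k with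
  | zero => intro j hj; simp at hj
  | succ k ih =>
    intro j hj
    have h2 : 2 ^ (k + 1) = 2 * 2 ^ k := by ring
    have h1 : 1 ≤ 2 ^ k := Nat.one_le_two_pow
    rcases Nat.even_or_odd j with he | ho
    · have hje : j % 2 = 0 := Nat.even_iff.mp he
      have : (2 ^ (k + 1) + j) % 2 = 0 := by omega
      rw [val2_even this, val2_even hje]
    · have hjo : j % 2 = 1 := Nat.odd_iff.mp ho
      have : (2 ^ (k + 1) + j) % 2 = 1 := by omega
      rw [val2_odd this, val2_odd hjo]
      have hdiv : (2 ^ (k + 1) + j) / 2 = 2 ^ k + j / 2 := by omega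
      rw [hdiv, ih (j / 2) (by omega)]

lemma zimin_eq : ∀ n, ziminWord n = (List.range (2 ^ n - 1)).map val2 := by
  intro n
  induction n with
  | zero => simp [ziminWord]
  | succ n ih =>
    have h1 : 1 ≤ 2 ^ n := Nat.one_le_two_pow
    have e1 : 2 ^ (n + 1) - 1 = (2 ^ n - 1) + 2 ^ n := by
      have : 2 ^ (n + 1) = 2 * 2 ^ n := by ring
      omega
    have e2 : 2 ^ n = (2 ^ n - 1) + 1 := by omega
    rw [ziminWord, e1, List.range_add, List.map_append, ← ih]
    congr 1
    rw [e2, List.range_succ_eq_map, List.map_cons, List.map_cons, List.map_map,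
      List.map_map]
    congr 1
    · have h4 : 2 ^ n - 1 + 1 - 1 = 2 ^ n - 1 := by omega
      rw [h4, Nat.add_zero, val2_pow_sub_one]
    · rw [ih]
      apply List.map_congr_left
      intro j hj
      rw [List.mem_range] at hj
      show val2 j = val2 (2 ^ n - 1 + 1 - 1 + Nat.succ j)
      have h3 : 2 ^ n - 1 + 1 - 1 + Nat.succ j = 2 ^ n + j := by omega
      rw [h3, val2_shift n j hj]

lemma mu_block (w : ℕ → Bool)
    (hfix : ∀ n, (List.range (4 * n)).map w = ((List.range n).map w).flatMap mu)
    (q : ℕ) :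
    [w (4 * q), w (4 * q + 1), w (4 * q + 2), w (4 * q + 3)] = mu (w q) := by
  have h1 := hfix q
  have h2 := hfix (q + 1)
  have e4 : 4 * (q + 1) = 4 * q + 4 := by ring
  rw [e4, List.range_add] at h2
  have er4 : List.range 4 = [0, 1, 2, 3] := by rfl
  rw [er4, List.map_append, List.range_succ, List.map_append,
    List.flatMap_append, ← h1] at h2
  have h3 := List.append_cancel_left h2
  simpa using h3

lemma w_val (w : ℕ → Bool)
    (hfix : ∀ n, (List.range (4 * n)).map w = ((List.range n).map w).flatMap mu) :
    ∀ j, w j = decide (val2 j % 2 = 1) := by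
  intro j
  induction j using Nat.strong_induction_on with
  | _ j ih =>
    set q := j / 4 with hq
    have hb := mu_block w hfix q
    have hmu : mu (w q) = [false, true, false, w q] := by
      cases hwq : w q <;> simp [mu]
    rw [hmu] at hb
    simp only [List.cons.injEq] at hb
    obtain ⟨hb0, hb1, hb2, hb3, -⟩ := hb
    have hr : j % 4 < 4 := Nat.mod_lt _ (by omega)
    have hj : j = 4 * q + j % 4 := by omega
    interval_cases h : j % 4
    · have hje : j % 2 = 0 := by omega
      rw [val2_even hje]
      have : j = 4 * q := by omega
      rw [this, hb0]; simp
    · have hjo : j % 2 = 1 := by omega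
      rw [val2_odd hjo]
      have hd : j / 2 = 2 * q := by omega
      rw [hd, val2_even (by omega)]
      have : j = 4 * q + 1 := by omega
      rw [this, hb1]; simp
    · have hje : j % 2 = 0 := by omega
      rw [val2_even hje]
      have : j = 4 * q + 2 := by omega
      rw [this, hb2]; simp
    · have hjo : j % 2 = 1 := by omega
      rw [val2_odd hjo]
      have hd : j / 2 = 2 * q + 1 := by omega
      rw [hd, val2_odd (by omega)]
      have hd2 : (2 * q + 1) / 2 = q := by omega
      rw [hd2]
      have hjq : j = 4 * q + 3 := by omega
      have hqlt : q < j := by omega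
      rw [hjq, hb3, ih q hqlt]
      have hm : (val2 q + 1 + 1) % 2 = val2 q % 2 := by omega
      rw [hm]

/-- Example 3: the infinite fixed point beginning with `a` of the morphism
`a → abaa`, `b → abab` is a Zimin encoding: for every `n ≥ 1` its prefix of
length `2^n − 1` is an image of `Z_n` under a non-erasing morphism. -/
theorem fixedPoint_mu_ziminEncoding (w : ℕ → Bool) (h0 : w 0 = false)
    (hfix : ∀ n, (List.range (4 * n)).map w = ((List.range n).map w).flatMap mu) :
    ∀ n, 1 ≤ n → IsZiminImage n ((List.range (2 ^ n - 1)).map w) := by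
  intro n _
  refine ⟨fun i => [decide (i % 2 = 1)], fun i => by simp, ?_⟩
  have hflat : ∀ l : List ℕ,
      l.flatMap (fun i => [decide (i % 2 = 1)]) = l.map (fun i => decide (i % 2 = 1)) := by
    intro l; induction l with
    | nil => simp
    | cons a t iht => simp [iht]
  rw [hflat, zimin_eq, List.map_map]
  apply List.map_congr_left
  intro j _
  exact w_val w hfix j
end
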